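/- For every x ∈ ℝ^N and every α ≥ 0, ‖x‖₁ ≤ ψ_α(x) ≤ √N · ‖x‖₂. -/

import Mathlib

open scoped ENNReal

noncomputable def phi (x σ : ℝ) : ℝ≥0∞ :=
  if 0 < σ then ENNReal.ofReal (x ^ 2 / (2 * σ) + σ / 2)
  else if x = 0 ∧ σ = 0 then 0 else ⊤

/-- ℓ1 norm of the first-order difference Dσ. -/
noncomputable def tv {N : ℕ} (σ : Fin N → ℝ) : ℝ :=
  ∑ i : Fin (N - 1),
    |σ ⟨i.val + 1, by have := i.isLt; omega⟩ - σ ⟨i.val, by have := i.isLt; omega⟩|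

/-- The LOP-ℓ2/ℓ1 penalty. -/
noncomputable def psi {N : ℕ} (α : ℝ) (x : Fin N → ℝ) : ℝ≥0∞ :=
  ⨅ (σ : Fin N → ℝ) (_ : tv σ ≤ α), ∑ n : Fin N, phi (x n) (σ n)

/-!
Pointwise, `φ(x, σ) ≥ |x|` by AM-GM, which gives the lower bound for every admissible `σ`.
For the upper bound, a constant `σ ≡ c` has `Dσ = 0`, so it is admissible for every `α ≥ 0`
and yields `ψ_α(x) ≤ ‖x‖₂² / (2c) + N c / 2`; the choice `c = ‖x‖₂ / √N` makes this `√N ‖x‖₂`.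
-/

lemma ofReal_abs_le_phi (x σ : ℝ) : ENNReal.ofReal |x| ≤ phi x σ := by
  unfold phi
  split_ifs with hσ hzero
  · apply ENNReal.ofReal_le_ofReal
    rw [div_add_div _ _ (by positivity) two_ne_zero, le_div_iff₀ (by positivity)]
    nlinarith [sq_nonneg (|x| - σ), sq_abs x]
  · simp [hzero.1]
  · exact le_top

lemma phi_of_pos {σ : ℝ} (x : ℝ) (hσ : 0 < σ) :
    phi x σ = ENNReal.ofReal (x ^ 2 / (2 * σ) + σ / 2) :=
  if_pos hσ

lemma phi_zero_zero : phi 0 0 = 0 := by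
  simp [phi]

lemma tv_const {N : ℕ} (c : ℝ) : tv (fun _ : Fin N ↦ c) = 0 := by
  simp [tv]

lemma ofReal_sum_abs_le_psi {N : ℕ} (α : ℝ) (x : Fin N → ℝ) :
    ENNReal.ofReal (∑ n, |x n|) ≤ psi α x := by
  refine le_iInf₂ fun σ _ ↦ ?_
  rw [ENNReal.ofReal_sum_of_nonneg fun n _ ↦ abs_nonneg (x n)]
  exact Finset.sum_le_sum fun n _ ↦ ofReal_abs_le_phi (x n) (σ n)

lemma psi_le_sum_phi_const {N : ℕ} {α : ℝ} (hα : 0 ≤ α) (x : Fin N → ℝ) (c : ℝ) :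
    psi α x ≤ ∑ n, phi (x n) c :=
  iInf₂_le (fun _ ↦ c) ((tv_const c).trans_le hα)

lemma sum_phi_const_of_pos {N : ℕ} (x : Fin N → ℝ) {c : ℝ} (hc : 0 < c) :
    ∑ n, phi (x n) c = ENNReal.ofReal ((∑ n, x n ^ 2) / (2 * c) + N * (c / 2)) := by
  simp_rw [phi_of_pos _ hc]
  rw [← ENNReal.ofReal_sum_of_nonneg fun n _ ↦ by positivity, Finset.sum_add_distrib,
    ← Finset.sum_div, Finset.sum_const, Finset.card_univ, Fintype.card_fin, nsmul_eq_mul]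

lemma div_two_mul_add_mul_div_two_eq {T M : ℝ} (hT : 0 < T) (hM : 0 < M) :
    T / (2 * (√T / √M)) + M * ((√T / √M) / 2) = √M * √T := by
  have hsqT : √T ^ 2 = T := Real.sq_sqrt hT.le
  have hsqM : √M ^ 2 = M := Real.sq_sqrt hM.le
  have := Real.sqrt_pos.2 hT
  have := Real.sqrt_pos.2 hM
  field_simp
  nlinarith

lemma psi_le_sqrt_card_mul_sqrt_sum_sq {N : ℕ} {α : ℝ} (hα : 0 ≤ α) (x : Fin N → ℝ) :
    psi α x ≤ ENNReal.ofReal (√N * √(∑ n, x n ^ 2)) := by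
  set T := ∑ n, x n ^ 2
  rcases (Finset.sum_nonneg fun n _ ↦ sq_nonneg (x n) : 0 ≤ T).eq_or_lt with hT | hT
  · have hx : ∀ n, x n = 0 := fun n ↦
      pow_eq_zero_iff two_ne_zero |>.1 <|
        (Finset.sum_eq_zero_iff_of_nonneg fun i _ ↦ sq_nonneg (x i)).1 hT.symm n
          (Finset.mem_univ n)
    calc psi α x ≤ ∑ n, phi (x n) 0 := psi_le_sum_phi_const hα x 0
      _ = 0 := by simp [hx, phi_zero_zero]
      _ ≤ _ := zero_le
  · have hN : (0 : ℝ) < N := by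
      rcases N with _ | _
      · simp at hT
      · positivity
    calc psi α x ≤ ∑ n, phi (x n) (√T / √N) := psi_le_sum_phi_const hα x _
      _ = ENNReal.ofReal (T / (2 * (√T / √N)) + N * ((√T / √N) / 2)) :=
        sum_phi_const_of_pos x (by positivity)
      _ = ENNReal.ofReal (√N * √T) := by rw [div_two_mul_add_mul_div_two_eq hT hN]

/-- ‖x‖₁ ≤ ψ_α(x) ≤ √N·‖x‖₂ for every x and every α ≥ 0. -/
theorem psi_bounds (N : ℕ) (x : Fin N → ℝ) (α : ℝ) (hα : 0 ≤ α) :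
    ENNReal.ofReal (∑ n : Fin N, |x n|) ≤ psi α x ∧
      psi α x ≤ ENNReal.ofReal (Real.sqrt N * Real.sqrt (∑ n : Fin N, x n ^ 2)) :=
  ⟨ofReal_sum_abs_le_psi α x, psi_le_sqrt_card_mul_sqrt_sum_sq hα x⟩
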